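/- arXiv:2211.02756 — 4 statements merged into one kernel-verified Lean document; each statement's English description precedes it below -/
import Mathlib

section
/- Let U = U₁⊗⋯⊗Uₙ be a local unitary on (ℂ^q)^{⊗n} and let d ∈ {0,…,n}. Then for all label vectors r, s ∈ ((ℤ/qℤ)²)ⁿ, the sum q^{−n} · Σ_{p ∈ ((ℤ/qℤ)²)ⁿ, wt(p)=d} Tr(U† E(p)† U · E(r)) · Tr(U† E(p) U · E(s)†) equals q^n if r = s and wt(r) = d, and equals 0 otherwise. -/
open Matrix Polynomial
open scoped BigOperators ComplexConjugate Kronecker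

noncomputable section

/-- Generalized Pauli `X` (cyclic shift) on `ℂ^q`. -/
def Xmat (q : ℕ) : Matrix (Fin q) (Fin q) ℂ :=
  fun i j => if (i : ℕ) = ((j : ℕ) + 1) % q then 1 else 0

/-- Generalized Pauli `Z` (clock) on `ℂ^q`, `Z|j⟩ = ζ^j |j⟩` with `ζ = exp(2πi/q)`. -/
def Zmat (q : ℕ) : Matrix (Fin q) (Fin q) ℂ :=
  Matrix.diagonal fun j => Complex.exp (2 * (Real.pi : ℂ) * Complex.I / (q : ℂ)) ^ (j : ℕ)

/-- Single-qudit Pauli `E(a,b) = X^a Z^b` for a label `(a,b) ∈ (ℤ/qℤ)²`. -/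
def Epauli (q : ℕ) (p : ZMod q × ZMod q) : Matrix (Fin q) (Fin q) ℂ :=
  Xmat q ^ p.1.val * Zmat q ^ p.2.val

/-- Multi-qudit Pauli `E(p) = E(p₁) ⊗ ⋯ ⊗ E(pₙ)` on the space indexed by `ι → Fin q`. -/
def EV (q : ℕ) {ι : Type} [Fintype ι] (p : ι → ZMod q × ZMod q) :
    Matrix (ι → Fin q) (ι → Fin q) ℂ :=
  fun v w => ∏ i, Epauli q (p i) (v i) (w i)

/-- Weight of a Pauli label vector: the number of non-identity factors. -/
def wtL (q : ℕ) {ι : Type} [Fintype ι] (p : ι → ZMod q × ZMod q) : ℕ :=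
  (Finset.univ.filter fun i => p i ≠ 0).card

/-- Kronecker (tensor) product of a family of local `q × q` matrices. -/
def kron (q : ℕ) {ι : Type} [Fintype ι] (Us : ι → Matrix (Fin q) (Fin q) ℂ) :
    Matrix (ι → Fin q) (ι → Fin q) ℂ :=
  fun v w => ∏ i, Us i (v i) (w i)

namespace Aux

def zq (q : ℕ) : ℂ := Complex.exp (2 * (Real.pi : ℂ) * Complex.I / (q : ℂ))

lemma prim (q : ℕ) [NeZero q] : IsPrimitiveRoot (zq q) q :=
  Complex.isPrimitiveRoot_exp q (NeZero.ne q)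

lemma geom (q : ℕ) [NeZero q] (x : ℂ) (hxq : x ^ q = 1) :
    ∑ j ∈ Finset.range q, x ^ j = if x = 1 then (q : ℂ) else 0 := by
  split_ifs with h
  · subst h; simp
  · rw [geom_sum_eq h, hxq]; simp

lemma conj_zq (q : ℕ) [NeZero q] : (starRingEnd ℂ) (zq q) = (zq q)⁻¹ := by
  rw [zq, ← Complex.exp_conj, ← Complex.exp_neg]
  congr 1
  simp only [map_div₀, _root_.map_mul, map_ofNat, Complex.conj_I, Complex.conj_ofReal,
    Complex.conj_natCast]
  ring

lemma zq_ne_zero (q : ℕ) : zq q ≠ 0 := Complex.exp_ne_zero _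

lemma zeta_sum' (q : ℕ) [NeZero q] (m k : ℕ) (hm : m < q) (hk : k < q) :
    ∑ j ∈ Finset.range q, (zq q ^ m * (starRingEnd ℂ) (zq q ^ k)) ^ j
      = if m = k then (q : ℂ) else 0 := by
  have hz := zq_ne_zero q
  have hx : zq q ^ m * (starRingEnd ℂ) (zq q ^ k) = zq q ^ m / zq q ^ k := by
    rw [map_pow, conj_zq, inv_pow, div_eq_mul_inv]
  have hq1 : zq q ^ q = 1 := (prim q).pow_eq_one
  rw [hx, geom (q := q) _ (by rw [div_pow, ← pow_mul, ← pow_mul, mul_comm m q, mul_comm k q,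
    pow_mul, pow_mul, hq1, one_pow, one_pow, div_one])]
  congr 1
  simp only [div_eq_one_iff_eq (pow_ne_zero _ hz), eq_iff_iff]
  exact ⟨fun h => (prim q).pow_inj hm hk h, fun h => by rw [h]⟩

lemma zeta_sum (q : ℕ) [NeZero q] (k : ℕ) (hk : k < q) :
    ∑ j ∈ Finset.range q, (zq q ^ k) ^ j = if k = 0 then (q : ℂ) else 0 := by
  have := zeta_sum' q k 0 hk (NeZero.pos q)
  simpa using this

end Aux

lemma Xpow_apply (q : ℕ) [NeZero q] (a : ℕ) (i j : Fin q) :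
    (Xmat q ^ a) i j = if (i : ℕ) = ((j : ℕ) + a) % q then 1 else 0 := by
  induction a generalizing i j with
  | zero =>
    simp [Matrix.one_apply, Nat.mod_eq_of_lt j.isLt, Fin.ext_iff]
  | succ a ih =>
    rw [pow_succ, Matrix.mul_apply]
    set c : Fin q := ⟨((j : ℕ) + 1) % q, Nat.mod_lt _ (NeZero.pos q)⟩ with hc
    have hx : ∀ k : Fin q, (Xmat q ^ a) i k * Xmat q k j
        = if k = c then (Xmat q ^ a) i k else 0 := by
      intro k
      have hk : Xmat q k j = if k = c then 1 else 0 := by simp [Xmat, hc, Fin.ext_iff]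
      rw [hk, mul_ite, mul_one, mul_zero]
    rw [Finset.sum_congr rfl fun k _ => hx k, Finset.sum_ite_eq' Finset.univ c,
      if_pos (Finset.mem_univ c), ih i c]
    have hmod : ((c : ℕ) + a) % q = ((j : ℕ) + (a + 1)) % q := by
      simp only [hc]
      rw [Nat.mod_add_mod]
      ring_nf
    rw [hmod]

lemma Epauli_apply (q : ℕ) [NeZero q] (p : ZMod q × ZMod q) (i j : Fin q) :
    Epauli q p i j = if (i : ℕ) = ((j : ℕ) + p.1.val) % q
      then Aux.zq q ^ ((j : ℕ) * p.2.val) else 0 := by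
  rw [Epauli, Zmat, Matrix.diagonal_pow, Matrix.mul_diagonal, Xpow_apply, Pi.pow_apply,
    ← pow_mul]
  split_ifs <;> simp [Aux.zq]

namespace Aux

lemma cond_iff (q : ℕ) [NeZero q] (i j : Fin q) (a : ZMod q) :
    ((i : ℕ) = ((j : ℕ) + a.val) % q) ↔ (((i : ℕ) : ZMod q) = ((j : ℕ) : ZMod q) + a) := by
  constructor
  · intro h
    rw [h, ZMod.natCast_mod, Nat.cast_add, ZMod.natCast_rightInverse a]
  · intro h
    have := congrArg ZMod.val h
    rwa [ZMod.val_natCast, Nat.mod_eq_of_lt i.isLt, ZMod.val_add, ZMod.val_natCast,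
      Nat.mod_eq_of_lt j.isLt] at this

lemma Epauli_apply' (q : ℕ) [NeZero q] (p : ZMod q × ZMod q) (i j : Fin q) :
    Epauli q p i j = if (((i : ℕ) : ZMod q) = ((j : ℕ) : ZMod q) + p.1)
      then zq q ^ ((j : ℕ) * p.2.val) else 0 := by
  rw [Epauli_apply]
  exact if_congr (cond_iff q i j p.1) rfl rfl

/-- the equivalence `Fin q ≃ ZMod q` by casting -/
def finZmod (q : ℕ) [NeZero q] : Fin q ≃ ZMod q where
  toFun i := ((i : ℕ) : ZMod q)
  invFun a := ⟨a.val, a.val_lt⟩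
  left_inv i := by simp [ZMod.val_natCast, Nat.mod_eq_of_lt i.isLt]
  right_inv a := by simp [ZMod.natCast_rightInverse a]

lemma sum_fin_zmod (q : ℕ) [NeZero q] (f : ZMod q → ℂ) :
    ∑ i : Fin q, f ((i : ℕ) : ZMod q) = ∑ a : ZMod q, f a :=
  Fintype.sum_equiv (finZmod q) _ _ (fun _ => rfl)

lemma sum_zmod_range (q : ℕ) [NeZero q] (f : ℕ → ℂ) :
    ∑ a : ZMod q, f a.val = ∑ j ∈ Finset.range q, f j := by
  rw [← sum_fin_zmod q (fun a => f a.val)]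
  rw [← Fin.sum_univ_eq_sum_range f q]
  exact Finset.sum_congr rfl fun i _ => by rw [ZMod.val_natCast, Nat.mod_eq_of_lt i.isLt]

end Aux

namespace Aux

lemma Epauli_zero (q : ℕ) : Epauli q 0 = 1 := by
  simp [Epauli, ZMod.val_zero]

lemma trace_Epauli (q : ℕ) [NeZero q] (p : ZMod q × ZMod q) :
    Matrix.trace (Epauli q p) = if p = 0 then (q : ℂ) else 0 := by
  rw [Matrix.trace]
  simp only [Matrix.diag]
  by_cases ha : p.1 = 0
  · have hav : p.1.val = 0 := by simp [ha]
    have h1 : ∀ j : Fin q, Epauli q p j j = (zq q ^ p.2.val) ^ (j : ℕ) := by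
      intro j
      rw [Epauli_apply, hav, if_pos (by rw [Nat.add_zero, Nat.mod_eq_of_lt j.isLt]),
        mul_comm, pow_mul]
    rw [Finset.sum_congr rfl fun j _ => h1 j, Fin.sum_univ_eq_sum_range,
      zeta_sum q p.2.val p.2.val_lt]
    have : p = 0 ↔ p.2.val = 0 := by
      rw [Prod.ext_iff, ZMod.val_eq_zero]
      simp [ha]
    simp [this]
  · have h1 : ∀ j : Fin q, Epauli q p j j = 0 := by
      intro j
      rw [Epauli_apply, if_neg]
      intro h
      apply ha
      have : ((j : ℕ) : ZMod q) = ((j : ℕ) : ZMod q) + p.1 := (cond_iff q j j p.1).mp h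
      rwa [left_eq_add] at this
    rw [Finset.sum_congr rfl fun j _ => h1 j]
    have hp : p ≠ 0 := fun h => ha (by rw [h]; rfl)
    simp [hp]

lemma trace_E_mul_E (q : ℕ) [NeZero q] (c c' : ZMod q × ZMod q) :
    Matrix.trace (Epauli q c * (Epauli q c')ᴴ) = if c = c' then (q : ℂ) else 0 := by
  rw [Matrix.trace]
  simp only [Matrix.diag, Matrix.mul_apply, Matrix.conjTranspose_apply]
  simp_rw [Complex.star_def, Epauli_apply' q]
  -- Σ_i Σ_j (ite..) * conj (ite ..)
  have key : ∀ i j : Fin q,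
      (if (((i : ℕ) : ZMod q) = ((j : ℕ) : ZMod q) + c.1) then zq q ^ ((j : ℕ) * c.2.val) else 0) *
        (starRingEnd ℂ) (if (((i : ℕ) : ZMod q) = ((j : ℕ) : ZMod q) + c'.1)
          then zq q ^ ((j : ℕ) * c'.2.val) else 0)
      = if (((i : ℕ) : ZMod q) = ((j : ℕ) : ZMod q) + c.1) ∧ c.1 = c'.1
          then (zq q ^ c.2.val * (starRingEnd ℂ) (zq q ^ c'.2.val)) ^ (j : ℕ) else 0 := by
    intro i j
    by_cases h1 : (((i : ℕ) : ZMod q) = ((j : ℕ) : ZMod q) + c.1)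
    · by_cases h2 : (((i : ℕ) : ZMod q) = ((j : ℕ) : ZMod q) + c'.1)
      · have hcc : c.1 = c'.1 := add_left_cancel (h1.symm.trans h2)
        rw [if_pos h1, if_pos h2, if_pos ⟨h1, hcc⟩, mul_pow, ← pow_mul, ← map_pow, ← pow_mul,
          mul_comm c.2.val (j : ℕ), mul_comm c'.2.val (j : ℕ)]
      · have hcc : c.1 ≠ c'.1 := fun h => h2 (h ▸ h1)
        rw [if_pos h1, if_neg h2, map_zero, mul_zero, if_neg (fun h => hcc h.2)]
    · rw [if_neg h1, zero_mul, if_neg (fun h => h1 h.1)]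
  simp_rw [key]
  rw [Finset.sum_comm]
  have inner : ∀ j : Fin q,
      (∑ i : Fin q, if (((i : ℕ) : ZMod q) = ((j : ℕ) : ZMod q) + c.1) ∧ c.1 = c'.1
          then (zq q ^ c.2.val * (starRingEnd ℂ) (zq q ^ c'.2.val)) ^ (j : ℕ) else 0)
      = if c.1 = c'.1 then (zq q ^ c.2.val * (starRingEnd ℂ) (zq q ^ c'.2.val)) ^ (j : ℕ)
        else 0 := by
    intro j
    rw [sum_fin_zmod q (fun a => if (a = ((j : ℕ) : ZMod q) + c.1) ∧ c.1 = c'.1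
      then (zq q ^ c.2.val * (starRingEnd ℂ) (zq q ^ c'.2.val)) ^ (j : ℕ) else 0)]
    simp_rw [ite_and]
    rw [Finset.sum_ite_eq' Finset.univ (((j : ℕ) : ZMod q) + c.1)
      (fun _ => if c.1 = c'.1 then (zq q ^ c.2.val * (starRingEnd ℂ) (zq q ^ c'.2.val)) ^ (j : ℕ)
        else 0), if_pos (Finset.mem_univ _)]
  rw [Finset.sum_congr rfl fun j _ => inner j]
  by_cases hB : c.1 = c'.1
  · simp only [hB, if_true, if_pos]
    rw [Fin.sum_univ_eq_sum_range, zeta_sum' q c.2.val c'.2.val c.2.val_lt c'.2.val_lt]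
    have : c = c' ↔ c.2.val = c'.2.val := by
      rw [Prod.ext_iff]
      exact ⟨fun h => by rw [h.2], fun h => ⟨hB, ZMod.val_injective q h⟩⟩
    simp [this]
  · have : c ≠ c' := fun h => hB (by rw [h])
    simp [hB, this]

end Aux

namespace Aux

lemma cast_inj_fin (q : ℕ) [NeZero q] (i j : Fin q) :
    (((i : ℕ) : ZMod q) = ((j : ℕ) : ZMod q)) ↔ i = j := by
  constructor
  · intro h
    have := congrArg ZMod.val h
    rw [ZMod.val_natCast, ZMod.val_natCast, Nat.mod_eq_of_lt i.isLt,
      Nat.mod_eq_of_lt j.isLt] at this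
    exact Fin.ext this
  · intro h; rw [h]

lemma pauli_complete (q : ℕ) [NeZero q] (v w x y : Fin q) :
    ∑ p : ZMod q × ZMod q, (starRingEnd ℂ) (Epauli q p w v) * Epauli q p x y
      = if v = y ∧ w = x then (q : ℂ) else 0 := by
  simp_rw [Epauli_apply' q]
  rw [Fintype.sum_prod_type]
  have key : ∀ a b : ZMod q,
      (starRingEnd ℂ) (if ((w : ℕ) : ZMod q) = ((v : ℕ) : ZMod q) + a
          then zq q ^ ((v : ℕ) * b.val) else 0) *
        (if ((x : ℕ) : ZMod q) = ((y : ℕ) : ZMod q) + a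
          then zq q ^ ((y : ℕ) * b.val) else 0)
      = (if ((w : ℕ) : ZMod q) - ((v : ℕ) : ZMod q) = a
          then (if ((x : ℕ) : ZMod q) = ((y : ℕ) : ZMod q) + a then (1 : ℂ) else 0) else 0) *
          (zq q ^ (y : ℕ) * (starRingEnd ℂ) (zq q ^ (v : ℕ))) ^ b.val := by
    intro a b
    have hphase : (starRingEnd ℂ) (zq q ^ ((v : ℕ) * b.val)) * zq q ^ ((y : ℕ) * b.val)
        = (zq q ^ (y : ℕ) * (starRingEnd ℂ) (zq q ^ (v : ℕ))) ^ b.val := by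
      rw [mul_pow, ← map_pow, ← pow_mul, ← pow_mul, mul_comm ((v : ℕ)) b.val,
        mul_comm ((y : ℕ)) b.val]
      ring
    have hc1 : (((w : ℕ) : ZMod q) = ((v : ℕ) : ZMod q) + a)
        ↔ (((w : ℕ) : ZMod q) - ((v : ℕ) : ZMod q) = a) := by
      rw [sub_eq_iff_eq_add']
    by_cases h1 : ((w : ℕ) : ZMod q) = ((v : ℕ) : ZMod q) + a
    · by_cases h2 : ((x : ℕ) : ZMod q) = ((y : ℕ) : ZMod q) + a
      · rw [if_pos h1, if_pos h2, if_pos (hc1.mp h1), if_pos h2, one_mul, hphase]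
      · rw [if_pos h1, if_neg h2, if_pos (hc1.mp h1), if_neg h2, mul_zero, zero_mul]
    · rw [if_neg h1, if_neg (fun h => h1 (hc1.mpr h)), map_zero, zero_mul, zero_mul]
  simp_rw [key]
  rw [← Finset.sum_mul_sum]
  rw [Finset.sum_ite_eq Finset.univ (((w : ℕ) : ZMod q) - ((v : ℕ) : ZMod q))
    (fun a => if ((x : ℕ) : ZMod q) = ((y : ℕ) : ZMod q) + a then (1 : ℂ) else 0),
    if_pos (Finset.mem_univ _)]
  rw [sum_zmod_range q (fun t => (zq q ^ (y : ℕ) * (starRingEnd ℂ) (zq q ^ (v : ℕ))) ^ t),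
    zeta_sum' q (y : ℕ) (v : ℕ) y.isLt v.isLt]
  by_cases hvy : v = y
  · subst hvy
    simp only [if_pos rfl]
    have hx : (((x : ℕ) : ZMod q) = ((v : ℕ) : ZMod q) + (((w : ℕ) : ZMod q) - ((v : ℕ) : ZMod q)))
        ↔ x = w := by
      rw [add_sub_cancel, cast_inj_fin]
    by_cases hwx : w = x
    · rw [if_pos (hx.mpr hwx.symm)]
      simp [hwx]
    · rw [if_neg (fun h => hwx (hx.mp h).symm)]
      simp [hwx]
  · have h2 : ¬ ((y : ℕ) = (v : ℕ)) := fun h => hvy (Fin.ext h.symm)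
    rw [if_neg h2, mul_zero, if_neg (fun h => hvy h.1)]

end Aux

namespace Aux

variable {ι : Type} [Fintype ι] [DecidableEq ι]

lemma kron_mul (q : ℕ) (A B : ι → Matrix (Fin q) (Fin q) ℂ) :
    kron q A * kron q B = kron q fun i => A i * B i := by
  ext v w
  rw [Matrix.mul_apply]
  show (∑ u : ι → Fin q, (∏ i, A i (v i) (u i)) * ∏ i, B i (u i) (w i))
    = ∏ i, (A i * B i) (v i) (w i)
  simp_rw [Matrix.mul_apply]
  rw [Fintype.prod_sum fun i k => A i (v i) k * B i k (w i)]
  exact Finset.sum_congr rfl fun u _ => Finset.prod_mul_distrib.symm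

lemma trace_kron (q : ℕ) (A : ι → Matrix (Fin q) (Fin q) ℂ) :
    Matrix.trace (kron q A) = ∏ i, Matrix.trace (A i) := by
  simp_rw [Matrix.trace, Matrix.diag]
  show (∑ v : ι → Fin q, ∏ i, A i (v i) (v i)) = ∏ i, ∑ k, A i k k
  rw [Fintype.prod_sum fun i k => A i k k]

lemma kron_conjT (q : ℕ) (A : ι → Matrix (Fin q) (Fin q) ℂ) :
    (kron q A)ᴴ = kron q fun i => (A i)ᴴ := by
  ext v w
  show star (∏ i, A i (w i) (v i)) = ∏ i, star (A i (w i) (v i))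
  simp [Complex.star_def, map_prod]

lemma EV_eq (q : ℕ) (p : ι → ZMod q × ZMod q) :
    EV q p = kron q fun i => Epauli q (p i) := rfl

lemma traceT (q : ℕ) (Us : ι → Matrix (Fin q) (Fin q) ℂ) (p r : ι → ZMod q × ZMod q) :
    Matrix.trace ((kron q Us)ᴴ * (EV q p)ᴴ * kron q Us * EV q r)
      = ∏ i, Matrix.trace ((Us i)ᴴ * (Epauli q (p i))ᴴ * Us i * Epauli q (r i)) := by
  rw [EV_eq, EV_eq, kron_conjT, kron_conjT, kron_mul, kron_mul, kron_mul, trace_kron]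

lemma traceT' (q : ℕ) (Us : ι → Matrix (Fin q) (Fin q) ℂ) (p s : ι → ZMod q × ZMod q) :
    Matrix.trace ((kron q Us)ᴴ * EV q p * kron q Us * (EV q s)ᴴ)
      = ∏ i, Matrix.trace ((Us i)ᴴ * Epauli q (p i) * Us i * (Epauli q (s i))ᴴ) := by
  rw [EV_eq, EV_eq, kron_conjT, kron_conjT, kron_mul, kron_mul, kron_mul, trace_kron]

lemma t_zero (q : ℕ) [NeZero q] (U : Matrix (Fin q) (Fin q) ℂ)
    (h1 : Uᴴ * U = 1) (h2 : U * Uᴴ = 1) (a c : ZMod q × ZMod q)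
    (h : ¬ (a = 0 ↔ c = 0)) :
    Matrix.trace (Uᴴ * (Epauli q a)ᴴ * U * Epauli q c) = 0 := by
  by_cases ha : a = 0
  · have hc : c ≠ 0 := fun hc => h (iff_of_true ha hc)
    subst ha
    rw [Epauli_zero, Matrix.conjTranspose_one, Matrix.mul_one, h1, Matrix.one_mul,
      trace_Epauli, if_neg hc]
  · have hc : c = 0 := by
      by_contra hc
      exact h (iff_of_false ha hc)
    subst hc
    rw [Epauli_zero, Matrix.mul_one, Matrix.trace_mul_cycle, h2, Matrix.one_mul,
      Matrix.trace_conjTranspose, trace_Epauli, if_neg ha, star_zero]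

lemma trace_conj_helper (q : ℕ) (U M N : Matrix (Fin q) (Fin q) ℂ) :
    Matrix.trace (Uᴴ * M * U * N) = Matrix.trace (M * (U * N * Uᴴ)) := by
  rw [Matrix.mul_assoc, Matrix.mul_assoc, Matrix.trace_mul_comm, Matrix.mul_assoc]

lemma site_sum (q : ℕ) [NeZero q] (U : Matrix (Fin q) (Fin q) ℂ)
    (h1 : Uᴴ * U = 1) (h2 : U * Uᴴ = 1) (c c' : ZMod q × ZMod q) :
    (∑ a : ZMod q × ZMod q,
        Matrix.trace (Uᴴ * (Epauli q a)ᴴ * U * Epauli q c) *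
          Matrix.trace (Uᴴ * Epauli q a * U * (Epauli q c')ᴴ))
      = if c = c' then (q : ℂ) ^ 2 else 0 := by
  set A := U * Epauli q c * Uᴴ with hA
  set B := U * (Epauli q c')ᴴ * Uᴴ with hB
  have hTa : ∀ a : ZMod q × ZMod q, Matrix.trace (Uᴴ * (Epauli q a)ᴴ * U * Epauli q c)
      = ∑ z : Fin q × Fin q, (starRingEnd ℂ) (Epauli q a z.2 z.1) * A z.2 z.1 := by
    intro a
    rw [trace_conj_helper, ← hA, Matrix.trace]
    simp [Matrix.diag, Matrix.mul_apply, Matrix.conjTranspose_apply, Complex.star_def,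
      Fintype.sum_prod_type]
  have hTb : ∀ a : ZMod q × ZMod q, Matrix.trace (Uᴴ * Epauli q a * U * (Epauli q c')ᴴ)
      = ∑ u : Fin q × Fin q, Epauli q a u.1 u.2 * B u.2 u.1 := by
    intro a
    rw [trace_conj_helper, ← hB, Matrix.trace]
    simp [Matrix.diag, Matrix.mul_apply, Fintype.sum_prod_type]
  simp_rw [hTa, hTb, Finset.sum_mul_sum]
  rw [Finset.sum_comm]
  rw [Finset.sum_congr rfl fun z _ => Finset.sum_comm]
  have hmid : ∀ z u : Fin q × Fin q,
      (∑ a : ZMod q × ZMod q,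
        ((starRingEnd ℂ) (Epauli q a z.2 z.1) * A z.2 z.1) * (Epauli q a u.1 u.2 * B u.2 u.1))
      = (if z.1 = u.2 ∧ z.2 = u.1 then (q : ℂ) else 0) * (A z.2 z.1 * B u.2 u.1) := by
    intro z u
    rw [Finset.sum_congr rfl fun a _ => mul_mul_mul_comm
      ((starRingEnd ℂ) (Epauli q a z.2 z.1)) (A z.2 z.1) (Epauli q a u.1 u.2) (B u.2 u.1)]
    rw [← Finset.sum_mul, pauli_complete q z.1 z.2 u.1 u.2]
  rw [Finset.sum_congr rfl fun z _ => Finset.sum_congr rfl fun u _ => hmid z u]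
  have hin : ∀ z : Fin q × Fin q,
      (∑ u : Fin q × Fin q,
        (if z.1 = u.2 ∧ z.2 = u.1 then (q : ℂ) else 0) * (A z.2 z.1 * B u.2 u.1))
      = (q : ℂ) * (A z.2 z.1 * B z.1 z.2) := by
    intro z
    rw [Fintype.sum_prod_type]
    have h0 : ∀ x y : Fin q,
        (if z.1 = y ∧ z.2 = x then (q : ℂ) else 0) * (A z.2 z.1 * B y x)
        = if z.1 = y then (if z.2 = x then (q : ℂ) * (A z.2 z.1 * B y x) else 0) else 0 := by
      intro x y
      by_cases hx : z.2 = x <;> by_cases hy : z.1 = y <;> simp [hx, hy]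
    simp_rw [h0]
    rw [Finset.sum_congr rfl fun x _ => Finset.sum_ite_eq Finset.univ z.1
      (fun y => if z.2 = x then (q : ℂ) * (A z.2 z.1 * B y x) else 0)]
    simp only [Finset.mem_univ, if_true]
    rw [Finset.sum_ite_eq Finset.univ z.2 (fun x => (q : ℂ) * (A z.2 z.1 * B z.1 x)),
      if_pos (Finset.mem_univ _)]
  rw [Finset.sum_congr rfl fun z _ => hin z]
  rw [← Finset.mul_sum]
  have htr : (∑ z : Fin q × Fin q, A z.2 z.1 * B z.1 z.2) = Matrix.trace (A * B) := by
    rw [Matrix.trace]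
    simp [Matrix.diag, Matrix.mul_apply, Fintype.sum_prod_type]
    rw [Finset.sum_comm]
  rw [htr]
  have hAB : Matrix.trace (A * B) = if c = c' then (q : ℂ) else 0 := by
    rw [hA, hB, Matrix.trace_mul_comm]
    simp only [Matrix.mul_assoc]
    rw [← Matrix.mul_assoc Uᴴ U, h1, Matrix.one_mul, Matrix.trace_mul_comm]
    simp only [Matrix.mul_assoc]
    rw [h1, Matrix.mul_one, Matrix.trace_mul_comm, trace_E_mul_E]
  rw [hAB]
  by_cases hcc : c = c' <;> simp [hcc, pow_two]

end Aux

namespace Aux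

lemma exists_mismatch {q : ℕ} {ι : Type} [Fintype ι] [DecidableEq ι]
    {p r : ι → ZMod q × ZMod q} (h : wtL q p ≠ wtL q r) :
    ∃ i, ¬ (p i = 0 ↔ r i = 0) := by
  by_contra hc
  push_neg at hc
  apply h
  unfold wtL
  congr 1
  exact Finset.filter_congr fun i _ => not_iff_not.mpr (hc i)

end Aux


/-- Lemma (bilinear sum): for a local unitary `U = U₁ ⊗ ⋯ ⊗ Uₙ`,
`q^{-n} Σ_{wt(p) = d} Tr(U† E(p)† U E(r)) Tr(U† E(p) U E(s)†)` equals `q^n` when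
`r = s` and `wt(r) = d`, and `0` otherwise. -/
theorem stmt0 (q n : ℕ) [NeZero q] (hq : 2 ≤ q) (hn : 1 ≤ n)
    (Us : Fin n → Matrix (Fin q) (Fin q) ℂ)
    (hU : ∀ j, Us j ∈ Matrix.unitaryGroup (Fin q) ℂ)
    (d : ℕ) (hd : d ≤ n) (r s : Fin n → ZMod q × ZMod q) :
    ((q : ℂ) ^ n)⁻¹ *
        ∑ p ∈ Finset.univ.filter (fun p : Fin n → ZMod q × ZMod q => wtL q p = d),
          Matrix.trace ((kron q Us)ᴴ * (EV q p)ᴴ * kron q Us * EV q r) *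
            Matrix.trace ((kron q Us)ᴴ * EV q p * kron q Us * (EV q s)ᴴ) =
      if r = s ∧ wtL q r = d then (q : ℂ) ^ n else 0 := by
  classical
  have hUs1 : ∀ j, (Us j)ᴴ * Us j = 1 := fun j => by
    have := (hU j).1
    rwa [Matrix.star_eq_conjTranspose] at this
  have hUs2 : ∀ j, Us j * (Us j)ᴴ = 1 := fun j => by
    have := (hU j).2
    rwa [Matrix.star_eq_conjTranspose] at this
  have hq0 : (q : ℂ) ≠ 0 := Nat.cast_ne_zero.mpr (NeZero.ne q)
  have hzero : ∀ p : Fin n → ZMod q × ZMod q, wtL q p ≠ wtL q r →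
      Matrix.trace ((kron q Us)ᴴ * (EV q p)ᴴ * kron q Us * EV q r) = 0 := by
    intro p hp
    obtain ⟨i, hi⟩ := Aux.exists_mismatch hp
    rw [Aux.traceT]
    exact Finset.prod_eq_zero (Finset.mem_univ i)
      (Aux.t_zero q (Us i) (hUs1 i) (hUs2 i) _ _ hi)
  by_cases hwr : wtL q r = d
  · have hext : (∑ p ∈ Finset.univ.filter (fun p : Fin n → ZMod q × ZMod q => wtL q p = d),
          Matrix.trace ((kron q Us)ᴴ * (EV q p)ᴴ * kron q Us * EV q r) *
            Matrix.trace ((kron q Us)ᴴ * EV q p * kron q Us * (EV q s)ᴴ))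
        = ∑ p : Fin n → ZMod q × ZMod q,
          Matrix.trace ((kron q Us)ᴴ * (EV q p)ᴴ * kron q Us * EV q r) *
            Matrix.trace ((kron q Us)ᴴ * EV q p * kron q Us * (EV q s)ᴴ) := by
      apply Finset.sum_subset (Finset.filter_subset _ _)
      intro p _ hp
      rw [Finset.mem_filter] at hp
      push_neg at hp
      have hne : wtL q p ≠ wtL q r := by
        rw [hwr]
        exact hp (Finset.mem_univ p)
      rw [hzero p hne, zero_mul]
    have hfull : (∑ p : Fin n → ZMod q × ZMod q,
          Matrix.trace ((kron q Us)ᴴ * (EV q p)ᴴ * kron q Us * EV q r) *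
            Matrix.trace ((kron q Us)ᴴ * EV q p * kron q Us * (EV q s)ᴴ))
        = ∏ i, (if r i = s i then (q : ℂ) ^ 2 else 0) := by
      simp_rw [Aux.traceT, Aux.traceT', ← Finset.prod_mul_distrib]
      rw [← Fintype.prod_sum fun (i : Fin n) (a : ZMod q × ZMod q) =>
        Matrix.trace ((Us i)ᴴ * (Epauli q a)ᴴ * Us i * Epauli q (r i)) *
          Matrix.trace ((Us i)ᴴ * Epauli q a * Us i * (Epauli q (s i))ᴴ)]
      exact Finset.prod_congr rfl fun i _ =>
        Aux.site_sum q (Us i) (hUs1 i) (hUs2 i) (r i) (s i)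
    rw [hext, hfull]
    by_cases hrs : r = s
    · subst hrs
      rw [if_pos ⟨rfl, hwr⟩]
      have hprod : (∏ _i : Fin n, if r _i = r _i then (q : ℂ) ^ 2 else 0)
          = ((q : ℂ) ^ 2) ^ n := by simp
      have h2n : ((q : ℂ) ^ 2) ^ n = (q : ℂ) ^ n * (q : ℂ) ^ n := by
        rw [← pow_mul, two_mul, pow_add]
      rw [hprod, h2n, ← mul_assoc, inv_mul_cancel₀ (pow_ne_zero n hq0), one_mul]
    · rw [if_neg (fun h => hrs h.1)]
      obtain ⟨i, hi⟩ : ∃ i, r i ≠ s i := by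
        by_contra hcon
        push_neg at hcon
        exact hrs (funext hcon)
      have hprod : (∏ i, if r i = s i then (q : ℂ) ^ 2 else 0) = 0 :=
        Finset.prod_eq_zero (Finset.mem_univ i) (if_neg hi)
      rw [hprod, mul_zero]
  · rw [if_neg (fun h => hwr h.2)]
    rw [Finset.sum_eq_zero, mul_zero]
    intro p hp
    rw [Finset.mem_filter] at hp
    have hne : wtL q p ≠ wtL q r := fun h => hwr (h.symm.trans hp.2)
    rw [hzero p hne, zero_mul]
end
end

section
/- Let ψ ∈ (ℂ^q)^{⊗n} be a unit vector and Π = ψψ† the rank-one projection onto ψ. Then A(z; Π, Π) = B(z; Π, Π) as polynomials in ℂ[z]; equivalently, for every d ∈ {0,…,n}, Σ_{wt(p)=d} Tr(E(p)†Π)Tr(E(p)Π) = Σ_{wt(p)=d} Tr(E(p)†ΠE(p)Π). -/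
open Matrix Polynomial
open scoped BigOperators ComplexConjugate Kronecker

noncomputable section

/-- Shor–Laflamme enumerator polynomial `A(z; M₁, M₂)`. -/
def enumA (q : ℕ) [NeZero q] {ι : Type} [Fintype ι] [DecidableEq ι]
    (M₁ M₂ : Matrix (ι → Fin q) (ι → Fin q) ℂ) : Polynomial ℂ :=
  ∑ p : ι → ZMod q × ZMod q,
    Polynomial.C (Matrix.trace ((EV q p)ᴴ * M₁) * Matrix.trace (EV q p * M₂)) *
      Polynomial.X ^ wtL q p

/-- Shor–Laflamme enumerator polynomial `B(z; M₁, M₂)`. -/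
def enumB (q : ℕ) [NeZero q] {ι : Type} [Fintype ι] [DecidableEq ι]
    (M₁ M₂ : Matrix (ι → Fin q) (ι → Fin q) ℂ) : Polynomial ℂ :=
  ∑ p : ι → ZMod q × ZMod q,
    Polynomial.C (Matrix.trace ((EV q p)ᴴ * M₁ * EV q p * M₂)) *
      Polynomial.X ^ wtL q p


lemma trace_mul_vecMulVec {m : Type*} [Fintype m] (M : Matrix m m ℂ) (ψ φ : m → ℂ) :
    Matrix.trace (M * Matrix.vecMulVec ψ φ) = ∑ i, ∑ j, φ i * M i j * ψ j := by
  simp only [Matrix.trace, Matrix.diag, Matrix.mul_apply, Matrix.vecMulVec_apply]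
  refine Finset.sum_congr rfl fun i _ => Finset.sum_congr rfl fun j _ => by ring

lemma vecMulVec_mul_mul {m : Type*} [Fintype m] (M : Matrix m m ℂ) (ψ φ : m → ℂ) :
    Matrix.vecMulVec ψ φ * M * Matrix.vecMulVec ψ φ =
      (∑ i, ∑ j, φ i * M i j * ψ j) • Matrix.vecMulVec ψ φ := by
  ext a b
  simp only [Matrix.mul_apply, Matrix.vecMulVec_apply, Matrix.smul_apply, smul_eq_mul,
    Finset.sum_mul, Finset.mul_sum]
  rw [Finset.sum_comm]
  refine Finset.sum_congr rfl fun i _ => Finset.sum_congr rfl fun j _ => by ring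

lemma key_trace {m : Type*} [Fintype m] (M : Matrix m m ℂ) (ψ φ : m → ℂ) :
    Matrix.trace (Mᴴ * Matrix.vecMulVec ψ φ * M * Matrix.vecMulVec ψ φ) =
      Matrix.trace (Mᴴ * Matrix.vecMulVec ψ φ) * Matrix.trace (M * Matrix.vecMulVec ψ φ) := by
  have h : Mᴴ * Matrix.vecMulVec ψ φ * M * Matrix.vecMulVec ψ φ
      = Mᴴ * (Matrix.vecMulVec ψ φ * M * Matrix.vecMulVec ψ φ) := by
    simp only [Matrix.mul_assoc]
  rw [h, vecMulVec_mul_mul, Matrix.mul_smul, Matrix.trace_smul, smul_eq_mul,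
    trace_mul_vecMulVec, trace_mul_vecMulVec M]
  ring

/-- For rank-one projections `Π = ψψ†` onto a unit vector, `A(z;Π,Π) = B(z;Π,Π)`. -/
theorem stmt5 (q n : ℕ) [NeZero q] (hq : 2 ≤ q) (hn : 1 ≤ n)
    (ψ : ((Fin n) → Fin q) → ℂ)
    (hψ : ∑ v, (starRingEnd ℂ) (ψ v) * ψ v = 1) :
    enumA q (Matrix.vecMulVec ψ (fun w => (starRingEnd ℂ) (ψ w)))
        (Matrix.vecMulVec ψ (fun w => (starRingEnd ℂ) (ψ w))) =
      enumB q (Matrix.vecMulVec ψ (fun w => (starRingEnd ℂ) (ψ w)))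
        (Matrix.vecMulVec ψ (fun w => (starRingEnd ℂ) (ψ w))) := by
  unfold enumA enumB
  refine Finset.sum_congr rfl fun p _ => ?_
  rw [key_trace]
end
end

section
/- Quantum MacWilliams identity (Shor–Laflamme): let M₁, M₂ be Hermitian q^n×q^n complex matrices. Then for all w, z ∈ ℂ, B(w,z; M₁, M₂) = A((w + (q²−1)z)/q, (w−z)/q; M₁, M₂). -/
/-!
Over `ZMod q` the generalized Pauli matrices are the Weyl operators `W(a,b)|y⟩ = ψ(y b)|y + a⟩`
for the standard additive character `ψ`. They satisfy the completeness relation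
`∑ₛ conj (E(s) b a) * E(s) v w = q ^ n δ_{bv} δ_{aw}` and the twisted commutation relation
`E(p)† E(s) E(p) = ψ ⟨p, s⟩ E(s)` for the symplectic form `⟨p, s⟩`. Expanding `M₁` in the Pauli
basis therefore gives `q ^ n Tr(E(p)† M₁ E(p) M₂) = ∑ₛ Tr(E(s)† M₁) Tr(E(s) M₂) ψ ⟨p, s⟩`.
Summing this against the weight monomial of `p`, the sum over `p` factorizes over the qudits,
and the character sum `∑ₚ ψ ⟨p, s⟩ = q² δ_{s,0}` turns each factor into `w + (q² - 1) z` or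
`w - z`. Homogeneity of degree `n` of `A` absorbs the remaining factor `q ^ n`.
-/

open Matrix Polynomial
open scoped BigOperators ComplexConjugate Kronecker

noncomputable section

/-- Homogeneous Shor–Laflamme `A`-enumerator, as a function of `(w, z) ∈ ℂ²`. -/
def enumAhom (q n : ℕ) [NeZero q] (M₁ M₂ : Matrix ((Fin n) → Fin q) ((Fin n) → Fin q) ℂ)
    (w z : ℂ) : ℂ :=
  ∑ p : Fin n → ZMod q × ZMod q,
    Matrix.trace ((EV q p)ᴴ * M₁) * Matrix.trace (EV q p * M₂) *
      w ^ (n - wtL q p) * z ^ wtL q p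

/-- Homogeneous Shor–Laflamme `B`-enumerator, as a function of `(w, z) ∈ ℂ²`. -/
def enumBhom (q n : ℕ) [NeZero q] (M₁ M₂ : Matrix ((Fin n) → Fin q) ((Fin n) → Fin q) ℂ)
    (w z : ℂ) : ℂ :=
  ∑ p : Fin n → ZMod q × ZMod q,
    Matrix.trace ((EV q p)ᴴ * M₁ * EV q p * M₂) *
      w ^ (n - wtL q p) * z ^ wtL q p

section Weyl

variable {R : Type*} [CommRing R] [DecidableEq R] (ψ : AddChar R ℂ)

def weyl (p : R × R) : Matrix R R ℂ :=
  Matrix.of fun x y => if x = y + p.1 then ψ (y * p.2) else 0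

def symplecticForm (p s : R × R) : R := p.1 * s.2 - p.2 * s.1

theorem weyl_zero : weyl ψ 0 = 1 := by
  ext x y
  simp [weyl, Matrix.one_apply]

variable [Fintype R]

theorem weyl_mul (p s : R × R) : weyl ψ p * weyl ψ s = ψ (s.1 * p.2) • weyl ψ (p + s) := by
  ext x y
  simp only [weyl, Matrix.mul_apply, Matrix.of_apply, Matrix.smul_apply, smul_eq_mul, ite_mul,
    zero_mul, mul_ite, mul_zero, Finset.sum_ite_eq', Finset.mem_univ, if_true, Prod.fst_add,
    Prod.snd_add]
  rw [if_congr (by rw [add_right_comm, add_assoc]) rfl rfl]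
  split_ifs
  · rw [← AddChar.map_add_eq_mul, ← AddChar.map_add_eq_mul]
    ring_nf
  · rfl

theorem weyl_pow {p : R × R} (hp : p.1 * p.2 = 0) (m : ℕ) : weyl ψ p ^ m = weyl ψ (m • p) := by
  induction m with
  | zero => rw [pow_zero, zero_smul, weyl_zero]
  | succ m ih =>
    rw [pow_succ, ih, weyl_mul, succ_nsmul, Prod.smul_snd, mul_smul_comm, hp, smul_zero,
      AddChar.map_zero_eq_one, one_smul]

theorem weyl_conjTranspose_mul_mul (p s : R × R) :
    (weyl ψ p)ᴴ * weyl ψ s * weyl ψ p = ψ (symplecticForm p s) • weyl ψ s := by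
  ext x y
  simp only [Matrix.mul_apply, Matrix.conjTranspose_apply, weyl, Matrix.of_apply,
    Matrix.smul_apply, smul_eq_mul, apply_ite star, star_zero, ite_mul, zero_mul, mul_ite,
    mul_zero, Finset.sum_ite_eq', Finset.mem_univ, if_true]
  have hcond : y + p.1 + s.1 = x + p.1 ↔ x = y + s.1 := by
    rw [add_right_comm, add_left_inj, eq_comm]
  rw [if_congr hcond rfl rfl]
  split_ifs with hx
  · rw [hx, Complex.star_def, ← AddChar.map_neg_eq_conj, ← AddChar.map_add_eq_mul,
      ← AddChar.map_add_eq_mul, ← AddChar.map_add_eq_mul, symplecticForm]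
    ring_nf
  · rfl

variable {ψ}

theorem sum_star_weyl_mul_weyl (hψ : ψ.IsPrimitive) (x y x' y' : R) :
    ∑ p : R × R, star (weyl ψ p x y) * weyl ψ p x' y' =
      if x = x' ∧ y = y' then (Fintype.card R : ℂ) else 0 := by
  have hterm : ∀ a b : R, star (weyl ψ (a, b) x y) * weyl ψ (a, b) x' y' =
      (if x = y + a ∧ x' = y' + a then 1 else 0) * ψ (b * (y' - y)) := by
    intro a b
    simp only [weyl, Matrix.of_apply]
    split_ifs with h₁ h₂ h₂ <;> try simp_all
    rw [← AddChar.map_neg_eq_conj, ← AddChar.map_add_eq_mul]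
    ring_nf
  simp_rw [Fintype.sum_prod_type, hterm, ← Finset.mul_sum, AddChar.sum_mulShift _ hψ, sub_eq_zero]
  by_cases hy : y = y'
  · subst hy
    have hcond : ∀ a, x = y + a ↔ a = x - y := fun a => by rw [eq_sub_iff_add_eq', eq_comm]
    by_cases hx : x = x'
    · subst hx
      simp [hcond]
    · have : ∀ a, ¬(x = y + a ∧ x' = y + a) := fun a ⟨h, h'⟩ => hx (h.trans h'.symm)
      simp [this, hx]
  · simp [hy, Ne.symm hy]

theorem sum_symplecticForm (hψ : ψ.IsPrimitive) (s : R × R) :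
    ∑ p : R × R, ψ (symplecticForm p s) = if s = 0 then (Fintype.card R : ℂ) ^ 2 else 0 := by
  have hsplit : ∀ p : R × R, ψ (symplecticForm p s) = ψ (p.1 * s.2) * ψ (p.2 * -s.1) := by
    intro p
    rw [← AddChar.map_add_eq_mul, symplecticForm]
    ring_nf
  simp only [hsplit, Fintype.sum_prod_type, ← Finset.sum_mul_sum, AddChar.sum_mulShift _ hψ,
    neg_eq_zero]
  rcases s with ⟨a, b⟩
  by_cases ha : a = 0 <;> by_cases hb : b = 0 <;> simp [ha, hb, sq]

theorem sum_symplecticForm_mul_ite (hψ : ψ.IsPrimitive) (s : R × R) (w z : ℂ) :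
    ∑ p : R × R, ψ (symplecticForm p s) * (if p = 0 then w else z) =
      if s = 0 then w + ((Fintype.card R : ℂ) ^ 2 - 1) * z else w - z := by
  have hsplit : ∀ p : R × R, ψ (symplecticForm p s) * (if p = 0 then w else z) =
      ψ (symplecticForm p s) * z + if p = 0 then w - z else 0 := by
    intro p
    split_ifs with hp
    · simp [hp, symplecticForm]
    · ring
  rw [Finset.sum_congr rfl fun p _ => hsplit p, Finset.sum_add_distrib, ← Finset.sum_mul,
    sum_symplecticForm hψ, Finset.sum_ite_eq' Finset.univ]
  simp only [Finset.mem_univ, if_true]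
  split_ifs <;> ring

end Weyl

section Pauli

variable (q : ℕ) [NeZero q]

def finEquivZMod : Fin q ≃ ZMod q where
  toFun j := (j : ℕ)
  invFun x := ⟨x.val, x.val_lt⟩
  left_inv j := Fin.ext (ZMod.val_cast_of_lt j.isLt)
  right_inv x := ZMod.natCast_zmod_val x

theorem stdAddChar_natCast (j : ℕ) :
    ZMod.stdAddChar (j : ZMod q) = Complex.exp (2 * Real.pi * Complex.I / q) ^ j := by
  rw [← Complex.exp_nat_mul, ← Int.cast_natCast, ZMod.stdAddChar_coe]
  push_cast
  ring_nf

theorem Xmat_eq_submatrix :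
    Xmat q = (weyl ZMod.stdAddChar (1, 0)).submatrix (finEquivZMod q) (finEquivZMod q) := by
  ext i j
  have hcond : ((i : ℕ) : ZMod q) = ((j : ℕ) : ZMod q) + 1 ↔ (i : ℕ) = ((j : ℕ) + 1) % q := by
    rw [← Nat.cast_add_one, ZMod.natCast_eq_natCast_iff', Nat.mod_eq_of_lt i.isLt]
  simp [Xmat, weyl, finEquivZMod, hcond]

theorem Zmat_eq_submatrix :
    Zmat q = (weyl ZMod.stdAddChar (0, 1)).submatrix (finEquivZMod q) (finEquivZMod q) := by
  ext i j
  simp only [Zmat, weyl, Matrix.diagonal_apply, Matrix.submatrix_apply, Matrix.of_apply,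
    add_zero, mul_one, (finEquivZMod q).injective.eq_iff]
  split_ifs with h
  · rw [h]
    exact (stdAddChar_natCast q j).symm
  · rfl

theorem Epauli_eq_submatrix (p : ZMod q × ZMod q) :
    Epauli q p = (weyl ZMod.stdAddChar p).submatrix (finEquivZMod q) (finEquivZMod q) := by
  have hreindex : ∀ M : Matrix (ZMod q) (ZMod q) ℂ, M.submatrix (finEquivZMod q) (finEquivZMod q) =
      Matrix.reindexAlgEquiv ℂ ℂ (finEquivZMod q).symm M := fun M => rfl
  rw [Epauli, Xmat_eq_submatrix, Zmat_eq_submatrix, hreindex, hreindex, hreindex, ← map_pow,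
    ← map_pow, ← map_mul, weyl_pow _ (mul_zero 1), weyl_pow _ (zero_mul 1), weyl_mul]
  simp

theorem Epauli_conjTranspose_mul_mul (p s : ZMod q × ZMod q) :
    (Epauli q p)ᴴ * Epauli q s * Epauli q p =
      ZMod.stdAddChar (symplecticForm p s) • Epauli q s := by
  simp only [Epauli_eq_submatrix, Matrix.conjTranspose_submatrix, Matrix.submatrix_mul_equiv,
    weyl_conjTranspose_mul_mul]
  rfl

theorem sum_star_Epauli_mul_Epauli (a b v w : Fin q) :
    ∑ s, star (Epauli q s a b) * Epauli q s v w = if a = v ∧ b = w then (q : ℂ) else 0 := by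
  simp only [Epauli_eq_submatrix, Matrix.submatrix_apply,
    sum_star_weyl_mul_weyl (ZMod.isPrimitive_stdAddChar q), ZMod.card,
    (finEquivZMod q).injective.eq_iff]

end Pauli

section PiKronecker

variable {ι : Type*} [Fintype ι] {l m n : Type*} {α : Type*} [CommSemiring α]

def piKronecker (A : ι → Matrix m n α) : Matrix (ι → m) (ι → n) α :=
  Matrix.of fun v w => ∏ i, A i (v i) (w i)

theorem piKronecker_mul [DecidableEq ι] [Fintype m] (A : ι → Matrix l m α)
    (B : ι → Matrix m n α) : piKronecker A * piKronecker B = piKronecker fun i => A i * B i := by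
  ext v w
  simp only [piKronecker, Matrix.mul_apply, Matrix.of_apply, Fintype.prod_sum,
    Finset.prod_mul_distrib]

theorem conjTranspose_piKronecker [StarRing α] (A : ι → Matrix m n α) :
    (piKronecker A)ᴴ = piKronecker fun i => (A i)ᴴ := by
  ext v w
  simp only [piKronecker, Matrix.conjTranspose_apply, Matrix.of_apply, star_prod]

theorem piKronecker_smul (c : ι → α) (A : ι → Matrix m n α) :
    piKronecker (fun i => c i • A i) = (∏ i, c i) • piKronecker A := by
  ext v w
  simp only [piKronecker, Matrix.smul_apply, Matrix.of_apply, smul_eq_mul, Finset.prod_mul_distrib]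

end PiKronecker

section MultiQudit

variable (q : ℕ) {ι : Type} [Fintype ι]

theorem EV_eq_piKronecker (p : ι → ZMod q × ZMod q) :
    EV q p = piKronecker fun i => Epauli q (p i) := rfl

variable [NeZero q] [DecidableEq ι]

theorem EV_conjTranspose_mul_mul (p s : ι → ZMod q × ZMod q) :
    (EV q p)ᴴ * EV q s * EV q p =
      (∏ i, ZMod.stdAddChar (symplecticForm (p i) (s i))) • EV q s := by
  simp only [EV_eq_piKronecker, conjTranspose_piKronecker, piKronecker_mul,
    Epauli_conjTranspose_mul_mul, piKronecker_smul]

theorem sum_star_EV_mul_EV (b a v w : ι → Fin q) :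
    ∑ s, star (EV q s b a) * EV q s v w =
      if b = v ∧ a = w then (q : ℂ) ^ Fintype.card ι else 0 := by
  have hfactor : ∀ s : ι → ZMod q × ZMod q, star (EV q s b a) * EV q s v w =
      ∏ i, star (Epauli q (s i) (b i) (a i)) * Epauli q (s i) (v i) (w i) := fun s => by
    simp only [EV_eq_piKronecker, piKronecker, Matrix.of_apply, star_prod,
      Finset.prod_mul_distrib]
  rw [Finset.sum_congr rfl fun s _ => hfactor s,
    ← Fintype.prod_sum fun i t => star (Epauli q t (b i) (a i)) * Epauli q t (v i) (w i)]
  simp only [sum_star_Epauli_mul_Epauli, Fintype.prod_ite_zero, Finset.prod_const,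
    Finset.card_univ, funext_iff, forall_and]

end MultiQudit

section TraceExpansion

variable {S m α : Type*} [Fintype S] [Fintype m] [DecidableEq m] [CommSemiring α] [StarRing α]
  {E : S → Matrix m m α} {c : α}

theorem sum_trace_conjTranspose_mul_smul
    (hE : ∀ b a v w, ∑ s, star (E s b a) * E s v w = if b = v ∧ a = w then c else 0)
    (M : Matrix m m α) : ∑ s, ((E s)ᴴ * M).trace • E s = c • M := by
  ext v w
  simp only [Matrix.sum_apply, Matrix.smul_apply, smul_eq_mul, Matrix.trace, Matrix.diag,
    Matrix.mul_apply, Matrix.conjTranspose_apply, Finset.sum_mul]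
  simp_rw [mul_right_comm _ (M _ _)]
  rw [Finset.sum_comm]
  simp_rw [Finset.sum_comm (s := (Finset.univ : Finset S)), ← Finset.sum_mul, hE, ite_mul,
    zero_mul, ite_and]
  simp

theorem mul_trace_conjTranspose_mul_mul_mul
    (hE : ∀ b a v w, ∑ s, star (E s b a) * E s v w = if b = v ∧ a = w then c else 0)
    {χ : S → S → α} (hχ : ∀ p s, (E p)ᴴ * E s * E p = χ p s • E s) (p : S)
    (M₁ M₂ : Matrix m m α) :
    c * ((E p)ᴴ * M₁ * E p * M₂).trace =
      ∑ s, ((E s)ᴴ * M₁).trace * (E s * M₂).trace * χ p s := by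
  calc c * ((E p)ᴴ * M₁ * E p * M₂).trace
      = ((E p)ᴴ * (c • M₁) * E p * M₂).trace := by
        simp only [Matrix.mul_smul, Matrix.smul_mul, Matrix.trace_smul, smul_eq_mul]
    _ = ((E p)ᴴ * (∑ s, ((E s)ᴴ * M₁).trace • E s) * E p * M₂).trace := by
        rw [sum_trace_conjTranspose_mul_smul hE]
    _ = ∑ s, ((E s)ᴴ * M₁).trace * (E s * M₂).trace * χ p s := by
        simp only [Matrix.mul_sum, Finset.sum_mul, Matrix.trace_sum, Matrix.mul_smul,
          Matrix.smul_mul, hχ, Matrix.trace_smul, smul_eq_mul]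
        exact Finset.sum_congr rfl fun s _ => by ring

end TraceExpansion

section Enumerators

variable (q : ℕ)

theorem wtL_le_card {ι : Type} [Fintype ι] (p : ι → ZMod q × ZMod q) :
    wtL q p ≤ Fintype.card ι :=
  Finset.card_filter_le _ _

theorem pow_sub_wtL_mul_pow_wtL {ι : Type} [Fintype ι] (p : ι → ZMod q × ZMod q) (w z : ℂ) :
    w ^ (Fintype.card ι - wtL q p) * z ^ wtL q p = ∏ i, if p i = 0 then w else z := by
  have hcard := Finset.card_filter_add_card_filter_not (s := Finset.univ) fun i => p i = 0
  rw [Finset.prod_ite, Finset.prod_const, Finset.prod_const, ← Finset.card_univ, ← hcard, wtL,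
    Nat.add_sub_cancel]

variable [NeZero q]

theorem sum_prod_symplecticForm_mul_prod_ite {ι : Type} [Fintype ι] [DecidableEq ι]
    (s : ι → ZMod q × ZMod q) (w z : ℂ) :
    ∑ p : ι → ZMod q × ZMod q, (∏ i, ZMod.stdAddChar (symplecticForm (p i) (s i))) *
        ∏ i, (if p i = 0 then w else z) =
      ∏ i, if s i = 0 then w + ((q : ℂ) ^ 2 - 1) * z else w - z := by
  simp only [← Finset.prod_mul_distrib]
  rw [← Fintype.prod_sum fun i t =>
    ZMod.stdAddChar (symplecticForm t (s i)) * if t = 0 then w else z]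
  simp only [sum_symplecticForm_mul_ite (ZMod.isPrimitive_stdAddChar q), ZMod.card]

variable {n : ℕ} (M₁ M₂ : Matrix (Fin n → Fin q) (Fin n → Fin q) ℂ)

theorem enumAhom_mul_mul (c w z : ℂ) :
    enumAhom q n M₁ M₂ (c * w) (c * z) = c ^ n * enumAhom q n M₁ M₂ w z := by
  simp only [enumAhom, Finset.mul_sum]
  refine Finset.sum_congr rfl fun p _ => ?_
  have hwt : wtL q p ≤ n := (wtL_le_card q p).trans_eq (Fintype.card_fin n)
  rw [mul_pow, mul_pow, ← pow_sub_mul_pow c hwt]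
  ring

theorem pow_mul_enumBhom_eq_enumAhom (w z : ℂ) :
    (q : ℂ) ^ n * enumBhom q n M₁ M₂ w z =
      enumAhom q n M₁ M₂ (w + ((q : ℂ) ^ 2 - 1) * z) (w - z) := by
  have htrace := mul_trace_conjTranspose_mul_mul_mul (sum_star_EV_mul_EV q)
    (EV_conjTranspose_mul_mul q) (M₁ := M₁) (M₂ := M₂)
  have hmono := pow_sub_wtL_mul_pow_wtL (ι := Fin n) q
  simp only [Fintype.card_fin] at htrace hmono
  calc (q : ℂ) ^ n * enumBhom q n M₁ M₂ w z
      = ∑ p : Fin n → ZMod q × ZMod q, ((q : ℂ) ^ n * ((EV q p)ᴴ * M₁ * EV q p * M₂).trace) *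
          (w ^ (n - wtL q p) * z ^ wtL q p) := by
        rw [enumBhom, Finset.mul_sum]
        exact Finset.sum_congr rfl fun p _ => by ring
    _ = ∑ p : Fin n → ZMod q × ZMod q, ∑ s, ((EV q s)ᴴ * M₁).trace * (EV q s * M₂).trace *
          (∏ i, ZMod.stdAddChar (symplecticForm (p i) (s i))) *
            ∏ i, (if p i = 0 then w else z) := by
        simp only [htrace, hmono, Finset.sum_mul]
    _ = ∑ s, ((EV q s)ᴴ * M₁).trace * (EV q s * M₂).trace *
          ∑ p : Fin n → ZMod q × ZMod q, (∏ i, ZMod.stdAddChar (symplecticForm (p i) (s i))) *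
            ∏ i, (if p i = 0 then w else z) := by
        rw [Finset.sum_comm]
        exact Finset.sum_congr rfl fun s _ => by
          rw [Finset.mul_sum]
          exact Finset.sum_congr rfl fun p _ => by ring
    _ = enumAhom q n M₁ M₂ (w + ((q : ℂ) ^ 2 - 1) * z) (w - z) := by
        rw [enumAhom]
        exact Finset.sum_congr rfl fun s _ => by
          rw [sum_prod_symplecticForm_mul_prod_ite, ← hmono]
          ring

end Enumerators

theorem stmt6_general (q n : ℕ) [NeZero q]
    (M₁ M₂ : Matrix ((Fin n) → Fin q) ((Fin n) → Fin q) ℂ) (w z : ℂ) :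
    enumBhom q n M₁ M₂ w z =
      enumAhom q n M₁ M₂ ((w + ((q : ℂ) ^ 2 - 1) * z) / (q : ℂ)) ((w - z) / (q : ℂ)) := by
  have hq : (q : ℂ) ≠ 0 := Nat.cast_ne_zero.mpr (NeZero.ne q)
  calc enumBhom q n M₁ M₂ w z
      = (q : ℂ)⁻¹ ^ n * ((q : ℂ) ^ n * enumBhom q n M₁ M₂ w z) := by
        rw [← mul_assoc, ← mul_pow, inv_mul_cancel₀ hq, one_pow, one_mul]
    _ = (q : ℂ)⁻¹ ^ n * enumAhom q n M₁ M₂ (w + ((q : ℂ) ^ 2 - 1) * z) (w - z) := by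
        rw [pow_mul_enumBhom_eq_enumAhom]
    _ = enumAhom q n M₁ M₂ ((w + ((q : ℂ) ^ 2 - 1) * z) / (q : ℂ)) ((w - z) / (q : ℂ)) := by
        rw [← enumAhom_mul_mul, inv_mul_eq_div, inv_mul_eq_div]

/-- Quantum MacWilliams identity for the Shor–Laflamme enumerators:
`B(w,z) = A((w + (q²−1)z)/q, (w−z)/q)`. -/
theorem stmt6 (q n : ℕ) [NeZero q] (hq : 2 ≤ q) (hn : 1 ≤ n)
    (M₁ M₂ : Matrix ((Fin n) → Fin q) ((Fin n) → Fin q) ℂ)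
    (hM₁ : M₁.IsHermitian) (hM₂ : M₂.IsHermitian) (w z : ℂ) :
    enumBhom q n M₁ M₂ w z =
      enumAhom q n M₁ M₂ ((w + ((q : ℂ) ^ 2 - 1) * z) / (q : ℂ)) ((w - z) / (q : ℂ)) :=
  stmt6_general q n M₁ M₂ w z
end
end

section
/- MacWilliams identity for double enumerators (Hu–Yang–Yau): let M₁, M₂ be Hermitian q^n×q^n complex matrices. For all w, x, y, z ∈ ℂ, D(w,x,y,z; M₁,M₂) = C((y+(q−1)x)/√q, (w−z)/√q, (w+(q−1)z)/√q, (y−x)/√q; M₁,M₂). -/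
open Matrix Polynomial
open scoped BigOperators ComplexConjugate Kronecker

noncomputable section

/-- `X`-weight of a Pauli label vector. -/
def wtX (q n : ℕ) (p : Fin n → ZMod q × ZMod q) : ℕ :=
  (Finset.univ.filter fun j => (p j).1 ≠ 0).card

/-- `Z`-weight of a Pauli label vector. -/
def wtZ (q n : ℕ) (p : Fin n → ZMod q × ZMod q) : ℕ :=
  (Finset.univ.filter fun j => (p j).2 ≠ 0).card

/-- Homogeneous double quantum weight enumerator `C(w,x,y,z; M₁, M₂)`. -/
def enumDblC (q n : ℕ) [NeZero q] (M₁ M₂ : Matrix ((Fin n) → Fin q) ((Fin n) → Fin q) ℂ)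
    (w x y z : ℂ) : ℂ :=
  ∑ p : Fin n → ZMod q × ZMod q,
    Matrix.trace ((EV q p)ᴴ * M₁) * Matrix.trace (EV q p * M₂) *
      x ^ wtX q n p * y ^ (n - wtX q n p) * z ^ wtZ q n p * w ^ (n - wtZ q n p)

/-- Homogeneous double quantum weight enumerator `D(w,x,y,z; M₁, M₂)`. -/
def enumDblD (q n : ℕ) [NeZero q] (M₁ M₂ : Matrix ((Fin n) → Fin q) ((Fin n) → Fin q) ℂ)
    (w x y z : ℂ) : ℂ :=
  ∑ p : Fin n → ZMod q × ZMod q,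
    Matrix.trace ((EV q p)ᴴ * M₁ * EV q p * M₂) *
      x ^ wtX q n p * y ^ (n - wtX q n p) * z ^ wtZ q n p * w ^ (n - wtZ q n p)

set_option linter.unusedSectionVars false

namespace HYY

variable {q : ℕ} [NeZero q]

/-- the standard additive character of `ZMod q`, valued in `ℂ`. -/
noncomputable def e (q : ℕ) [NeZero q] : AddChar (ZMod q) ℂ := ZMod.stdAddChar

lemma e_natCast (m : ℕ) :
    e q (m : ZMod q) = Complex.exp (2 * (Real.pi : ℂ) * Complex.I / q) ^ m := by
  rw [e, ZMod.stdAddChar_apply, ZMod.toCircle_natCast, ← Complex.exp_nat_mul]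
  congr 1; ring

lemma conj_e (x : ZMod q) : conj (e q x) = e q (-x) := by
  rw [AddChar.map_neg_eq_inv, e]
  simp [ZMod.stdAddChar_apply, ← Circle.coe_inv_eq_conj]

lemma e_sum {ι : Type} (s : Finset ι) (f : ι → ZMod q) :
    e q (∑ m ∈ s, f m) = ∏ m ∈ s, e q (f m) := by
  classical
  induction s using Finset.cons_induction with
  | empty => simp [AddChar.map_zero_eq_one]
  | cons i s hi ih => rw [Finset.sum_cons, Finset.prod_cons, AddChar.map_add_eq_mul, ih]

lemma e_orth (b : ZMod q) : ∑ x : ZMod q, e q (x * b) = if b = 0 then (q : ℂ) else 0 := by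
  have := AddChar.sum_mulShift b (ZMod.isPrimitive_stdAddChar q)
  simpa [e, ZMod.card] using this

/-- cast `Fin q → ZMod q`. -/
def fz (i : Fin q) : ZMod q := ((i : ℕ) : ZMod q)

def toFin (x : ZMod q) : Fin q := ⟨x.val, x.val_lt⟩

@[simp] lemma fz_toFin (x : ZMod q) : fz (toFin x) = x := by
  simp [fz, toFin, ZMod.natCast_val, ZMod.cast_id]

@[simp] lemma toFin_fz (i : Fin q) : toFin (fz i) = i := by
  ext
  simp [fz, toFin, ZMod.val_natCast, Nat.mod_eq_of_lt i.isLt]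

lemma fz_inj {i j : Fin q} (h : fz i = fz j) : i = j := by
  have := congrArg toFin h; simpa using this

lemma eq_toFin_iff {i : Fin q} {x : ZMod q} : i = toFin x ↔ fz i = x := by
  constructor
  · rintro rfl; simp
  · intro h; rw [← h, toFin_fz]

lemma Xpow_apply (a : ℕ) (i j : Fin q) :
    (Xmat q ^ a) i j = if (i : ℕ) = ((j : ℕ) + a) % q then 1 else 0 := by
  induction a generalizing j with
  | zero =>
    simp only [pow_zero, Matrix.one_apply, Nat.add_zero, Nat.mod_eq_of_lt j.isLt]
    simp [Fin.ext_iff]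
  | succ a ih =>
    rw [pow_succ, Matrix.mul_apply]
    have hq : 0 < q := Fin.pos i
    rw [Finset.sum_eq_single (⟨((j : ℕ) + 1) % q, Nat.mod_lt _ hq⟩ : Fin q)]
    · rw [ih]
      simp only [Xmat]
      have h2 : (((j : ℕ) + 1) % q + a) % q = ((j : ℕ) + (a + 1)) % q := by
        rw [Nat.mod_add_mod]; congr 1; omega
      simp [h2]
    · intro k _ hk
      have : Xmat q k j = 0 := by
        simp only [Xmat]
        rw [if_neg]
        intro hc
        apply hk
        ext
        exact hc
      rw [this, mul_zero]
    · intro h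
      exact absurd (Finset.mem_univ _) h

lemma cond_iff (i j : Fin q) (a : ZMod q) :
    ((i : ℕ) = ((j : ℕ) + a.val) % q) ↔ (fz i = fz j + a) := by
  constructor
  · intro h
    unfold fz
    rw [h, ZMod.natCast_mod]
    push_cast
    simp [ZMod.natCast_val, ZMod.cast_id]
  · intro h
    have := congrArg ZMod.val h
    rw [ZMod.val_add] at this
    simp only [fz, ZMod.val_natCast] at this
    rw [Nat.mod_eq_of_lt i.isLt, Nat.mod_add_mod] at this
    exact this

lemma Epauli_apply (pr : ZMod q × ZMod q) (i j : Fin q) :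
    Epauli q pr i j = if fz i = fz j + pr.1 then e q (pr.2 * fz j) else 0 := by
  unfold Epauli Zmat
  rw [Matrix.diagonal_pow, Matrix.mul_diagonal, Xpow_apply]
  have : e q (pr.2 * fz j) = (Complex.exp (2 * (Real.pi : ℂ) * Complex.I / q) ^ ((j:ℕ))) ^ pr.2.val := by
    rw [← pow_mul]
    rw [← e_natCast]
    congr 1
    push_cast [fz]
    rw [mul_comm]
    congr 1
    simp [ZMod.natCast_val, ZMod.cast_id]
  rw [this]
  simp only [Pi.pow_apply]
  by_cases h : fz i = fz j + pr.1
  · rw [if_pos h, if_pos ((cond_iff i j pr.1).2 h), one_mul]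
  · rw [if_neg h, if_neg (fun hc => h ((cond_iff i j pr.1).1 hc)), zero_mul]

section Multi

variable {ι : Type} [Fintype ι] [DecidableEq ι]

/-- shift of basis vectors effected by `EV q p`. -/
def sig (p : ι → ZMod q × ZMod q) (w : ι → Fin q) : ι → Fin q :=
  fun m => toFin (fz (w m) + (p m).1)

/-- phase exponent of `EV q p` on basis vector `w`. -/
def beta (p : ι → ZMod q × ZMod q) (w : ι → Fin q) : ZMod q :=
  ∑ m, (p m).2 * fz (w m)

@[simp] lemma fz_sig (p : ι → ZMod q × ZMod q) (w : ι → Fin q) (m : ι) :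
    fz (sig p w m) = fz (w m) + (p m).1 := by
  simp [sig]

lemma eq_sig_iff {p : ι → ZMod q × ZMod q} {v w : ι → Fin q} :
    v = sig p w ↔ ∀ m, fz (v m) = fz (w m) + (p m).1 := by
  constructor
  · rintro rfl m; simp
  · intro h; funext m; rw [show v m = sig p w m from eq_toFin_iff.2 (h m)]

lemma EV_apply (p : ι → ZMod q × ZMod q) (v w : ι → Fin q) :
    EV q p v w = if v = sig p w then e q (beta p w) else 0 := by
  unfold EV
  have : ∀ m : ι, Epauli q (p m) (v m) (w m)
      = if fz (v m) = fz (w m) + (p m).1 then e q ((p m).2 * fz (w m)) else 0 :=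
    fun m => Epauli_apply (p m) (v m) (w m)
  rw [Finset.prod_congr rfl (fun m _ => this m), Fintype.prod_ite_zero]
  rw [← e_sum]
  congr 1
  · simp [eq_sig_iff]

/-- single-site orthogonality. -/
lemma site_orth (s v i j : Fin q) :
    ∑ ab : ZMod q × ZMod q, conj (Epauli q ab s v) * Epauli q ab i j
      = if s = i ∧ v = j then (q : ℂ) else 0 := by
  rw [Fintype.sum_prod_type]
  have key : ∀ a b : ZMod q, conj (Epauli q (a, b) s v) * Epauli q (a, b) i j
      = if (fz s = fz v + a ∧ fz i = fz j + a) then e q (b * (fz j - fz v)) else 0 := by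
    intro a b
    rw [Epauli_apply, Epauli_apply, apply_ite conj, map_zero]
    simp only [conj_e]
    rw [ite_zero_mul_ite_zero]
    congr 1
    rw [← AddChar.map_add_eq_mul]
    congr 1
    ring
  simp only [key]
  have hiff : (fz j - fz v = 0) ↔ (v = j) := by
    rw [sub_eq_zero]
    exact ⟨fun h => fz_inj h.symm, fun h => by rw [h]⟩
  have inner : ∀ a : ZMod q,
      (∑ b : ZMod q, if (fz s = fz v + a ∧ fz i = fz j + a) then e q (b * (fz j - fz v)) else 0)
        = if (fz s = fz v + a ∧ fz i = fz j + a) then (if v = j then (q:ℂ) else 0) else 0 := by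
    intro a
    by_cases h : fz s = fz v + a ∧ fz i = fz j + a
    · simp only [if_pos h]
      rw [show (∑ b : ZMod q, e q (b * (fz j - fz v))) = _ from e_orth _]
      rw [if_congr hiff rfl rfl]
    · simp [h]
  simp only [inner]
  by_cases hv : v = j
  · subst hv
    rw [Finset.sum_eq_single (fz s - fz v)]
    · have harith : fz v + (fz s - fz v) = fz s := by ring
      by_cases hs : s = i
      · subst hs
        simp [harith]
      · have h1 : ¬ (fz i = fz v + (fz s - fz v)) := by
          rw [harith]
          exact fun hc => hs (fz_inj hc.symm)
        rw [if_neg (fun hc => h1 hc.2), if_neg (fun hc => hs hc.1)]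
    · intro a _ ha
      rw [if_neg]
      rintro ⟨h1, -⟩
      exact ha (by rw [h1]; ring)
    · simp
  · have hz : ∀ a : ZMod q, (if fz s = fz v + a ∧ fz i = fz j + a
        then (if v = j then (q:ℂ) else 0) else 0) = 0 := by
      intro a; simp [hv]
    simp only [hz, Finset.sum_const_zero]
    simp [hv]

/-- multi-site orthogonality. -/
lemma EV_orth (s v i j : ι → Fin q) :
    ∑ p : ι → ZMod q × ZMod q, conj (EV q p s v) * EV q p i j
      = if s = i ∧ v = j then (q : ℂ) ^ (Fintype.card ι) else 0 := by
  have expand : ∀ p : ι → ZMod q × ZMod q,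
      conj (EV q p s v) * EV q p i j
        = ∏ m, (conj (Epauli q (p m) (s m) (v m)) * Epauli q (p m) (i m) (j m)) := by
    intro p
    unfold EV
    rw [map_prod, ← Finset.prod_mul_distrib]
  simp only [expand]
  rw [← Fintype.piFinset_univ]
  have hps := Finset.prod_univ_sum (fun _ : ι => (Finset.univ : Finset (ZMod q × ZMod q)))
    (fun m ab => conj (Epauli q ab (s m) (v m)) * Epauli q ab (i m) (j m))
  rw [← hps]
  have : ∀ m : ι, (∑ ab : ZMod q × ZMod q,
      conj (Epauli q ab (s m) (v m)) * Epauli q ab (i m) (j m))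
      = if s m = i m ∧ v m = j m then (q : ℂ) else 0 := fun m => site_orth _ _ _ _
  rw [Finset.prod_congr rfl (fun m _ => this m), Fintype.prod_ite_zero]
  simp only [Finset.prod_const, Finset.card_univ]
  congr 1
  simp [forall_and, funext_iff, eq_iff_iff]

/-- Pauli expansion of an arbitrary matrix. -/
lemma expand_matrix (M : Matrix (ι → Fin q) (ι → Fin q) ℂ) :
    (((q : ℂ) ^ (Fintype.card ι))⁻¹) •
      ∑ p : ι → ZMod q × ZMod q, (Matrix.trace ((EV q p)ᴴ * M)) • EV q p = M := by
  have hq0 : (q : ℂ) ≠ 0 := Nat.cast_ne_zero.2 (NeZero.ne q)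
  ext i j
  simp only [Matrix.smul_apply, Matrix.sum_apply, smul_eq_mul]
  have tr : ∀ p : ι → ZMod q × ZMod q, Matrix.trace ((EV q p)ᴴ * M)
      = ∑ v, ∑ s, conj (EV q p s v) * M s v := by
    intro p
    rw [Matrix.trace]
    apply Finset.sum_congr rfl
    intro v _
    rw [Matrix.diag, Matrix.mul_apply]
    apply Finset.sum_congr rfl
    intro s _
    rw [Matrix.conjTranspose_apply]
    rfl
  calc (((q : ℂ) ^ (Fintype.card ι))⁻¹) *
        ∑ p : ι → ZMod q × ZMod q, Matrix.trace ((EV q p)ᴴ * M) * EV q p i j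
      = (((q : ℂ) ^ (Fintype.card ι))⁻¹) *
        ∑ v, ∑ s, M s v * ∑ p : ι → ZMod q × ZMod q, conj (EV q p s v) * EV q p i j := by
        congr 1
        simp only [tr, Finset.sum_mul, Finset.mul_sum]
        rw [Finset.sum_comm]
        apply Finset.sum_congr rfl; intro v _
        rw [Finset.sum_comm]
        apply Finset.sum_congr rfl; intro s _
        apply Finset.sum_congr rfl; intro p _
        ring
    _ = M i j := by
        simp only [EV_orth]
        rw [Finset.sum_eq_single j]
        · rw [Finset.sum_eq_single i]
          · rw [if_pos ⟨rfl, rfl⟩]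
            field_simp
          · intro s _ hs
            rw [if_neg (by tauto), mul_zero]
          · intro h; exact absurd (Finset.mem_univ _) h
        · intro v _ hv
          apply Finset.sum_eq_zero
          intro s _
          rw [if_neg (by tauto), mul_zero]
        · intro h; exact absurd (Finset.mem_univ _) h

/-- the symplectic phase `χ(p, p')`. -/
def chi (p p' : ι → ZMod q × ZMod q) : ℂ :=
  e q (∑ m, ((p m).1 * (p' m).2 - (p m).2 * (p' m).1))

lemma conj_rel (p p' : ι → ZMod q × ZMod q) :
    (EV q p)ᴴ * EV q p' * EV q p = chi p p' • EV q p' := by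
  ext v w
  rw [Matrix.mul_apply]
  have colv : ∀ t : ι → Fin q, ((EV q p)ᴴ * EV q p') v t
      = conj (e q (beta p v)) * EV q p' (sig p v) t := by
    intro t
    rw [Matrix.mul_apply]
    rw [Finset.sum_eq_single (sig p v)]
    · rw [Matrix.conjTranspose_apply, EV_apply, if_pos rfl]
      rfl
    · intro s _ hs
      rw [Matrix.conjTranspose_apply, EV_apply, if_neg hs]
      simp
    · simp
  simp only [colv]
  rw [Finset.sum_eq_single (sig p w)]
  · rw [EV_apply p, if_pos rfl, Matrix.smul_apply, smul_eq_mul, EV_apply p', EV_apply p']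
    have hcond : (sig p v = sig p' (sig p w)) ↔ (v = sig p' w) := by
      rw [eq_sig_iff, eq_sig_iff]
      constructor
      · intro h m
        have := h m
        simp only [fz_sig] at this
        linear_combination this
      · intro h m
        simp only [fz_sig]
        linear_combination h m
    by_cases hc : v = sig p' w
    · rw [if_pos (hcond.2 hc), if_pos hc]
      rw [conj_e]
      rw [← AddChar.map_add_eq_mul, ← AddChar.map_add_eq_mul]
      rw [chi, ← AddChar.map_add_eq_mul]
      congr 1
      have hv : ∀ m, fz (v m) = fz (w m) + (p' m).1 := eq_sig_iff.1 hc
      unfold beta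
      simp only [fz_sig]
      rw [← Finset.sum_neg_distrib, ← Finset.sum_add_distrib, ← Finset.sum_add_distrib,
        ← Finset.sum_add_distrib]
      apply Finset.sum_congr rfl
      intro m _
      rw [hv m]
      ring
    · rw [if_neg (fun hh => hc (hcond.1 hh)), if_neg hc]
      simp
  · intro t _ ht
    rw [EV_apply p, if_neg ht, mul_zero]
  · simp

/-- the key trace identity (step A). -/
lemma trace_key (M₁ M₂ : Matrix (ι → Fin q) (ι → Fin q) ℂ) (p : ι → ZMod q × ZMod q) :
    Matrix.trace ((EV q p)ᴴ * M₁ * EV q p * M₂)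
      = ((q : ℂ) ^ (Fintype.card ι))⁻¹ * ∑ p' : ι → ZMod q × ZMod q,
          chi p p' * (Matrix.trace ((EV q p')ᴴ * M₁) * Matrix.trace (EV q p' * M₂)) := by
  conv_lhs => rw [← expand_matrix M₁]
  rw [Matrix.mul_smul, Matrix.smul_mul, Matrix.smul_mul, Matrix.trace_smul, smul_eq_mul]
  congr 1
  rw [Matrix.mul_sum, Matrix.sum_mul, Matrix.sum_mul, Matrix.trace_sum]
  apply Finset.sum_congr rfl
  intro p' _
  rw [Matrix.mul_smul, Matrix.smul_mul, Matrix.smul_mul, Matrix.trace_smul, smul_eq_mul]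
  have : (EV q p)ᴴ * EV q p' * EV q p * M₂ = chi p p' • (EV q p' * M₂) := by
    rw [conj_rel, Matrix.smul_mul]
  rw [show (EV q p)ᴴ * (EV q p') * EV q p * M₂ = chi p p' • (EV q p' * M₂) from this]
  rw [Matrix.trace_smul, smul_eq_mul]
  ring

/-- the basic twisted character sum. -/
lemma sum1 (c : ZMod q) (x y : ℂ) :
    ∑ a : ZMod q, e q (a * c) * (if a ≠ 0 then x else y)
      = if c = 0 then y + ((q : ℂ) - 1) * x else y - x := by
  have h1 : ∀ a : ZMod q, e q (a * c) * (if a ≠ 0 then x else y)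
      = x * e q (a * c) + (if a = 0 then y - x else 0) := by
    intro a
    by_cases h : a = 0 <;> simp [h, AddChar.map_zero_eq_one] <;> ring
  simp only [h1]
  rw [Finset.sum_add_distrib, ← Finset.mul_sum, e_orth c, Finset.sum_ite_eq' Finset.univ 0]
  simp only [Finset.mem_univ, if_true]
  by_cases hc : c = 0 <;> simp [hc] <;> ring

/-- single-site character sum for step B. -/
lemma site_B (x y z w : ℂ) (a' b' : ZMod q) :
    ∑ ab : ZMod q × ZMod q, e q (ab.1 * b' - ab.2 * a') *
        ((if ab.1 ≠ 0 then x else y) * (if ab.2 ≠ 0 then z else w))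
      = (if b' = 0 then y + ((q : ℂ) - 1) * x else y - x) *
        (if a' = 0 then w + ((q : ℂ) - 1) * z else w - z) := by
  rw [Fintype.sum_prod_type]
  have h1 : ∀ a b : ZMod q, e q (a * b' - b * a') *
        ((if a ≠ 0 then x else y) * (if b ≠ 0 then z else w))
      = (e q (a * b') * (if a ≠ 0 then x else y)) *
        (e q (b * (-a')) * (if b ≠ 0 then z else w)) := by
    intro a b
    rw [sub_eq_add_neg, AddChar.map_add_eq_mul]
    rw [show -(b * a') = b * (-a') by ring]
    ring
  simp only [h1]
  rw [← Finset.sum_mul_sum]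
  rw [sum1, sum1]
  congr 1
  simp [neg_eq_zero]

section FinN

variable {n : ℕ}

/-- step B: the character-sum evaluation of `∑ₚ χ(p,p') · monomial(p)`. -/
lemma step_B (p' : Fin n → ZMod q × ZMod q) (x y z w : ℂ) :
    ∑ p : Fin n → ZMod q × ZMod q, chi p p' *
        ∏ m, ((if (p m).1 ≠ 0 then x else y) * (if (p m).2 ≠ 0 then z else w))
      = ∏ m, ((if (p' m).2 = 0 then y + ((q : ℂ) - 1) * x else y - x) *
              (if (p' m).1 = 0 then w + ((q : ℂ) - 1) * z else w - z)) := by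
  have h1 : ∀ p : Fin n → ZMod q × ZMod q, chi p p' *
        ∏ m, ((if (p m).1 ≠ 0 then x else y) * (if (p m).2 ≠ 0 then z else w))
      = ∏ m, (e q ((p m).1 * (p' m).2 - (p m).2 * (p' m).1) *
          ((if (p m).1 ≠ 0 then x else y) * (if (p m).2 ≠ 0 then z else w))) := by
    intro p
    rw [chi, e_sum, ← Finset.prod_mul_distrib]
  simp only [h1]
  have hps := Finset.prod_univ_sum (fun _ : Fin n => (Finset.univ : Finset (ZMod q × ZMod q)))
    (fun m ab => e q (ab.1 * (p' m).2 - ab.2 * (p' m).1) *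
      ((if ab.1 ≠ 0 then x else y) * (if ab.2 ≠ 0 then z else w)))
  rw [Fintype.piFinset_univ] at hps
  rw [← hps]
  apply Finset.prod_congr rfl
  intro m _
  exact site_B x y z w (p' m).1 (p' m).2

end FinN

end Multi

end HYY

namespace HYY

variable {q n : ℕ} [NeZero q]

lemma wtX_le (p : Fin n → ZMod q × ZMod q) : wtX q n p ≤ n :=
  le_trans (Finset.card_filter_le _ _) (by simp)

lemma wtZ_le (p : Fin n → ZMod q × ZMod q) : wtZ q n p ≤ n :=
  le_trans (Finset.card_filter_le _ _) (by simp)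

lemma monom_eq (p : Fin n → ZMod q × ZMod q) (x y z w : ℂ) :
    x ^ wtX q n p * y ^ (n - wtX q n p) * z ^ wtZ q n p * w ^ (n - wtZ q n p)
      = ∏ m, ((if (p m).1 ≠ 0 then x else y) * (if (p m).2 ≠ 0 then z else w)) := by
  rw [Finset.prod_mul_distrib]
  rw [Finset.prod_ite (fun _ => x) (fun _ => y), Finset.prod_ite (fun _ => z) (fun _ => w)]
  simp only [Finset.prod_const]
  have hx : (Finset.univ.filter fun j => ¬ (p j).1 ≠ 0).card = n - wtX q n p := by
    have := Finset.card_filter_add_card_filter_not (s := (Finset.univ : Finset (Fin n)))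
      (p := fun j => (p j).1 ≠ 0)
    rw [Finset.card_univ, Fintype.card_fin] at this
    rw [wtX]
    omega
  have hz : (Finset.univ.filter fun j => ¬ (p j).2 ≠ 0).card = n - wtZ q n p := by
    have := Finset.card_filter_add_card_filter_not (s := (Finset.univ : Finset (Fin n)))
      (p := fun j => (p j).2 ≠ 0)
    rw [Finset.card_univ, Fintype.card_fin] at this
    rw [wtZ]
    omega
  rw [hx, hz, wtX, wtZ]
  ring

lemma prodB_eq (p' : Fin n → ZMod q × ZMod q) (Y Y' W W' : ℂ) :
    ∏ m, ((if (p' m).2 = 0 then Y else Y') * (if (p' m).1 = 0 then W else W'))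
      = Y ^ (n - wtZ q n p') * Y' ^ wtZ q n p' * W ^ (n - wtX q n p') * W' ^ wtX q n p' := by
  rw [Finset.prod_mul_distrib]
  rw [Finset.prod_ite (fun _ => Y) (fun _ => Y'), Finset.prod_ite (fun _ => W) (fun _ => W')]
  simp only [Finset.prod_const]
  have e1 : (Finset.univ.filter fun j => (p' j).2 = 0).card = n - wtZ q n p' := by
    have h2 := Finset.card_filter_add_card_filter_not (s := (Finset.univ : Finset (Fin n)))
      (p := fun j => (p' j).2 ≠ 0)
    rw [Finset.card_univ, Fintype.card_fin] at h2
    have h3 : (Finset.univ.filter fun j => ¬ (p' j).2 ≠ 0) = (Finset.univ.filter fun j => (p' j).2 = 0) := by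
      ext m; simp
    rw [h3] at h2
    rw [wtZ]
    omega
  have e2 : (Finset.univ.filter fun j => ¬ (p' j).2 = 0).card = wtZ q n p' := by
    rw [wtZ]
  have e3 : (Finset.univ.filter fun j => (p' j).1 = 0).card = n - wtX q n p' := by
    have h2 := Finset.card_filter_add_card_filter_not (s := (Finset.univ : Finset (Fin n)))
      (p := fun j => (p' j).1 ≠ 0)
    rw [Finset.card_univ, Fintype.card_fin] at h2
    have h3 : (Finset.univ.filter fun j => ¬ (p' j).1 ≠ 0) = (Finset.univ.filter fun j => (p' j).1 = 0) := by
      ext m; simp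
    rw [h3] at h2
    rw [wtX]
    omega
  have e4 : (Finset.univ.filter fun j => ¬ (p' j).1 = 0).card = wtX q n p' := by
    rw [wtX]
  rw [e1, e2, e3, e4]
  ring

end HYY

/-- MacWilliams identity for the double enumerators (Hu–Yang–Yau). -/
theorem stmt10 (q n : ℕ) [NeZero q] (hq : 2 ≤ q) (hn : 1 ≤ n)
    (M₁ M₂ : Matrix ((Fin n) → Fin q) ((Fin n) → Fin q) ℂ)
    (hM₁ : M₁.IsHermitian) (hM₂ : M₂.IsHermitian) (w x y z : ℂ) :
    enumDblD q n M₁ M₂ w x y z =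
      enumDblC q n M₁ M₂
        ((y + ((q : ℂ) - 1) * x) / ((Real.sqrt q : ℝ) : ℂ))
        ((w - z) / ((Real.sqrt q : ℝ) : ℂ))
        ((w + ((q : ℂ) - 1) * z) / ((Real.sqrt q : ℝ) : ℂ))
        ((y - x) / ((Real.sqrt q : ℝ) : ℂ)) := by
  classical
  have hq0 : (q : ℂ) ≠ 0 := Nat.cast_ne_zero.2 (NeZero.ne q)
  set s : ℂ := ((Real.sqrt q : ℝ) : ℂ) with hs_def
  have hs2 : s ^ 2 = (q : ℂ) := by
    rw [hs_def]
    norm_cast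
    exact Real.sq_sqrt (Nat.cast_nonneg q)
  rw [enumDblD, enumDblC]
  have step1 : ∀ p : Fin n → ZMod q × ZMod q,
      Matrix.trace ((EV q p)ᴴ * M₁ * EV q p * M₂)
        = ((q : ℂ) ^ n)⁻¹ * ∑ p' : Fin n → ZMod q × ZMod q,
            HYY.chi p p' * (Matrix.trace ((EV q p')ᴴ * M₁) * Matrix.trace (EV q p' * M₂)) := by
    intro p
    have := HYY.trace_key M₁ M₂ p
    rwa [Fintype.card_fin] at this
  simp only [step1]
  have hL : ∀ p : Fin n → ZMod q × ZMod q,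
      (((q : ℂ) ^ n)⁻¹ * ∑ p' : Fin n → ZMod q × ZMod q,
          HYY.chi p p' * (Matrix.trace ((EV q p')ᴴ * M₁) * Matrix.trace (EV q p' * M₂))) *
        x ^ wtX q n p * y ^ (n - wtX q n p) * z ^ wtZ q n p * w ^ (n - wtZ q n p)
      = ∑ p' : Fin n → ZMod q × ZMod q,
          ((q : ℂ) ^ n)⁻¹ * (Matrix.trace ((EV q p')ᴴ * M₁) * Matrix.trace (EV q p' * M₂)) *
            (HYY.chi p p' *
              (x ^ wtX q n p * y ^ (n - wtX q n p) * z ^ wtZ q n p * w ^ (n - wtZ q n p))) := by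
    intro p
    simp only [Finset.mul_sum, Finset.sum_mul]
    apply Finset.sum_congr rfl
    intro p' _
    ring
  rw [Finset.sum_congr rfl (fun p _ => hL p), Finset.sum_comm]
  apply Finset.sum_congr rfl
  intro p' _
  rw [← Finset.mul_sum]
  have hinner : (∑ p : Fin n → ZMod q × ZMod q, HYY.chi p p' *
      (x ^ wtX q n p * y ^ (n - wtX q n p) * z ^ wtZ q n p * w ^ (n - wtZ q n p)))
      = (y + ((q : ℂ) - 1) * x) ^ (n - wtZ q n p') * (y - x) ^ wtZ q n p' *
        (w + ((q : ℂ) - 1) * z) ^ (n - wtX q n p') * (w - z) ^ wtX q n p' := by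
    calc (∑ p : Fin n → ZMod q × ZMod q, HYY.chi p p' *
        (x ^ wtX q n p * y ^ (n - wtX q n p) * z ^ wtZ q n p * w ^ (n - wtZ q n p)))
        = ∑ p : Fin n → ZMod q × ZMod q, HYY.chi p p' *
            ∏ m, ((if (p m).1 ≠ 0 then x else y) * (if (p m).2 ≠ 0 then z else w)) := by
          apply Finset.sum_congr rfl
          intro p _
          rw [HYY.monom_eq]
      _ = _ := by
          rw [HYY.step_B p' x y z w, HYY.prodB_eq]
  rw [hinner]
  have hx1 : wtX q n p' + (n - wtX q n p') = n := Nat.add_sub_cancel' (HYY.wtX_le p')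
  have hz1 : wtZ q n p' + (n - wtZ q n p') = n := Nat.add_sub_cancel' (HYY.wtZ_le p')
  have hqs : s ^ wtX q n p' * s ^ (n - wtX q n p') * (s ^ wtZ q n p' * s ^ (n - wtZ q n p'))
      = (q : ℂ) ^ n := by
    rw [← pow_add, ← pow_add, hx1, hz1, ← pow_add, ← two_mul, pow_mul, hs2]
  have hinv : ((q : ℂ) ^ n)⁻¹
      = (s ^ wtX q n p')⁻¹ * (s ^ (n - wtX q n p'))⁻¹ *
        ((s ^ wtZ q n p')⁻¹ * (s ^ (n - wtZ q n p'))⁻¹) := by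
    rw [← mul_inv, ← mul_inv, ← mul_inv, hqs]
  rw [div_pow, div_pow, div_pow, div_pow, hinv]
  rw [div_eq_mul_inv, div_eq_mul_inv, div_eq_mul_inv, div_eq_mul_inv]
  ring
end
end
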